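/- For every t > 2, the permutation 2,5,4,1,6,7,...,(t+4),3 of length t+4 is sortable by t stacks in series (by some sequence of legal moves), but the left-greedy algorithm on t stacks fails on it (specifically, it fails at the moment the element t+4 would need to enter the stacks). -/

import Mathlib

/-- A configuration for sorting with `t` stacks in series: the remaining input,
the stacks (index `0` is the leftmost, next to the output; index `t-1` is the
rightmost, next to the input; the head of each list is the top of the stack),
and the output produced so far. -/
structure Conf where
  input : List ℕ
  stks : List (List ℕ)
  output : List ℕ
deriving DecidableEq, Repr

/-- `x` may be placed on top of a stack iff the stack is empty or `x` is smaller
than the current top (stacks are increasing from top to bottom). -/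
def canPush (x : ℕ) : List ℕ → Bool
  | [] => true
  | y :: _ => decide (x < y)

/-- Moves, ordered left to right: `0` = pop the leftmost stack to the output
(legal only for the next element of the identity); `m` with `0 < m < t` = move the
top of stack `m` one stack to the left; `t` = push the next input element onto the
rightmost stack. -/
def legal (t : ℕ) (c : Conf) (m : ℕ) : Bool :=
  if m = 0 then
    match c.stks.getD 0 [] with
    | x :: _ => x == c.output.length + 1
    | [] => false
  else if m < t then
    match c.stks.getD m [] with
    | x :: _ => canPush x (c.stks.getD (m-1) [])
    | [] => false
  else if m = t then
    match c.input with
    | x :: _ => canPush x (c.stks.getD (t-1) [])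
    | [] => false
  else false

/-- Perform move `m` on configuration `c` (with `t` stacks). -/
def applyMove (t : ℕ) (c : Conf) (m : ℕ) : Conf :=
  if m = 0 then
    match c.stks.getD 0 [] with
    | x :: s => ⟨c.input, c.stks.set 0 s, c.output ++ [x]⟩
    | [] => c
  else if m < t then
    match c.stks.getD m [] with
    | x :: s => ⟨c.input, (c.stks.set m s).set (m-1) (x :: c.stks.getD (m-1) []), c.output⟩
    | [] => c
  else
    match c.input with
    | x :: rest => ⟨rest, c.stks.set (t-1) (x :: c.stks.getD (t-1) []), c.output⟩
    | [] => c

def initConf (t : ℕ) (p : List ℕ) : Conf := ⟨p, List.replicate t [], []⟩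

/-- The fully sorted configuration: empty input and stacks, output `1,2,...,n`. -/
def finalConf (t n : ℕ) : Conf := ⟨[], List.replicate t [], List.range' 1 n⟩

/-- Run a sequence of moves, requiring each to be legal. -/
def runLegal (t : ℕ) : Conf → List ℕ → Option Conf
  | c, [] => some c
  | c, m :: ms => if legal t c m then runLegal t (applyMove t c m) ms else none

/-- `p` is sortable by `t` stacks in series by some sequence of legal moves. -/
def Sortable (t : ℕ) (p : List ℕ) : Prop :=
  ∃ ms : List ℕ, runLegal t (initConf t p) ms = some (finalConf t p.length)

/-- The leftmost legal move, if any. -/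
def leftMove (t : ℕ) (c : Conf) : Option ℕ :=
  ((List.range (t+1)).filter (fun m => legal t c m)).head?

/-- The rightmost legal move, if any. -/
def rightMove (t : ℕ) (c : Conf) : Option ℕ :=
  ((List.range (t+1)).filter (fun m => legal t c m)).getLast?

/-- One step of a greedy algorithm given by the move selector `mv`
(the configuration is unchanged if no move is legal, i.e. the algorithm fails or is done). -/
def greedyStep (mv : ℕ → Conf → Option ℕ) (t : ℕ) (c : Conf) : Conf :=
  match mv t c with
  | some m => applyMove t c m
  | none => c

/-- The greedy algorithm given by `mv` sorts `p` with `t` stacks in series. -/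
def GreedySorts (mv : ℕ → Conf → Option ℕ) (t : ℕ) (p : List ℕ) : Prop :=
  ∃ k : ℕ, (greedyStep mv t)^[k] (initConf t p) = finalConf t p.length

def LeftGreedySorts : ℕ → List ℕ → Prop := GreedySorts leftMove
def RightGreedySorts : ℕ → List ℕ → Prop := GreedySorts rightMove

/-- `p` is a permutation of `1,...,n` (as a list). -/
def IsPermOf (n : ℕ) (p : List ℕ) : Prop := p.Perm (List.range' 1 n)

/-- The position of the element `x` in configuration `c`: `0` if in the output
(furthest left), `j+1` if in stack `j`, `t+1` if still in the input (furthest right). -/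
def posOf (t : ℕ) (c : Conf) (x : ℕ) : ℕ :=
  if x ∈ c.output then 0
  else match (List.range t).find? (fun j => decide (x ∈ c.stks.getD j [])) with
    | some j => j + 1
    | none => t + 1

/-- `c` is at the `i`-th critical moment for the greedy algorithm `mv` on a
permutation of length `n`: either the chosen move is the entry of the `i`-th
element into the stacks, or the algorithm fails (no legal move, incomplete output). -/
def IsCrit (mv : ℕ → Conf → Option ℕ) (t i n : ℕ) (c : Conf) : Prop :=
  (c.input.length + i = n + 1 ∧ mv t c = some t) ∨
  (mv t c = none ∧ c.output.length < n)

/-- `c` is the configuration at the `i`-th critical moment of the greedy algorithm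
`mv` run on `p` (the first moment along the run satisfying `IsCrit`). -/
def CritConf (mv : ℕ → Conf → Option ℕ) (t i n : ℕ) (p : List ℕ) (c : Conf) : Prop :=
  ∃ k : ℕ, (greedyStep mv t)^[k] (initConf t p) = c ∧ IsCrit mv t i n c ∧
    ∀ k' < k, ¬ IsCrit mv t i n ((greedyStep mv t)^[k'] (initConf t p))

/-- No stack is empty while some stack to its right is nonempty. -/
def NoGap (t : ℕ) (c : Conf) : Prop :=
  ∀ j j' : ℕ, j < j' → j' < t → c.stks.getD j' [] ≠ [] → c.stks.getD j [] ≠ []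

/-- `r` contains `q` as a pattern. -/
def ContainsPat (r q : List ℕ) : Prop :=
  ∃ f : Fin q.length → Fin r.length, StrictMono f ∧
    ∀ a b : Fin q.length, q.get a < q.get b ↔ r.get (f a) < r.get (f b)

/-!
To sort: 2, 5 and 4 enter stacks 0, 1 and 2; then 1 passes over all of them and 1, 2 are output;
5 and then 4 move onto stack 0, the elements 6, ..., t + 4 fill stacks 1, ..., t - 1, one each,
and 3 passes over them all, after which everything leaves in increasing order.

Left-greedy instead moves 4 onto 5 as soon as 4 enters, so once 1 and 2 are output it moves 4 alone
to stack 0 and leaves 5 on stack 1. Each of 6, 7, ... then slides left onto the first empty stack,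
so 4 + j comes to rest on stack j. When t + 4 arrives, stack t - 1 holds t + 3 and no move is
legal: the run is stuck in a configuration fixed by the greedy step and different from the sorted
one.
-/

namespace SeriesStacks

open Function Relation

lemma exists_iterate_of_reflTransGen {α : Type*} {φ : α → α} {a b : α}
    (h : ReflTransGen (fun x y => φ x = y) a b) : ∃ k, φ^[k] a = b := by
  induction h with
  | refl => exact ⟨0, rfl⟩
  | tail _ hstep ih =>
    obtain ⟨k, rfl⟩ := ih
    exact ⟨k + 1, by rw [iterate_succ_apply', hstep]⟩

lemma iterate_ne_of_isFixedPt {α : Type*} {φ : α → α} {a b c : α} {m : ℕ} (hb : φ^[m] a = b)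
    (hfb : IsFixedPt φ b) (hfc : IsFixedPt φ c) (hbc : b ≠ c) (n : ℕ) : φ^[n] a ≠ c := by
  intro hn
  rcases le_total n m with h | h
  · rw [← hb, ← Nat.sub_add_cancel h, iterate_add_apply, hn, (hfc.iterate _).eq] at hbc
    exact hbc rfl
  · rw [← hn, ← Nat.sub_add_cancel h, iterate_add_apply, hb, (hfb.iterate _).eq] at hbc
    exact hbc rfl

def mkConf (t : ℕ) (inp : List ℕ) (f : ℕ → List ℕ) (out : List ℕ) : Conf :=
  ⟨inp, (List.range t).map f, out⟩

def place (f : ℕ → List ℕ) (i x : ℕ) : ℕ → List ℕ := update f i (x :: f i)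

def ladder (c a b : ℕ) : ℕ → List ℕ := fun l => if a ≤ l ∧ l < b then [c + l] else []

def leftGreedyCounterexample (t : ℕ) : List ℕ := [2, 5, 4, 1] ++ List.range' 6 (t - 1) ++ [3]

variable {t : ℕ} {inp out : List ℕ} {f g : ℕ → List ℕ}

lemma length_leftGreedyCounterexample (ht : 0 < t) :
    (leftGreedyCounterexample t).length = t + 4 := by
  simp [leftGreedyCounterexample]
  omega

lemma place_comm {i j : ℕ} (h : i ≠ j) (x y : ℕ) :
    place (place f i x) j y = place (place f j y) i x := by
  funext l
  simp only [place, update_apply]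
  split_ifs <;> simp_all

lemma place_apply_of_ne {i l : ℕ} (x : ℕ) (h : l ≠ i) : place f i x l = f l := by
  simp [place, h]

lemma getD_map_range {l : ℕ} (h : l < t) : ((List.range t).map f).getD l [] = f l := by
  simp [h]

lemma set_map_range (l : ℕ) (v : List ℕ) :
    ((List.range t).map f).set l v = (List.range t).map (update f l v) := by
  refine List.ext_getElem (by simp) fun n h _ => ?_
  simp only [List.getElem_set, List.getElem_map, List.getElem_range, update_apply]
  grind

lemma initConf_eq (p : List ℕ) : initConf t p = mkConf t p (fun _ => []) [] := by
  simp [initConf, mkConf, List.map_const']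

lemma finalConf_eq (n : ℕ) : finalConf t n = mkConf t [] (fun _ => []) (List.range' 1 n) := by
  simp [finalConf, mkConf, List.map_const']

lemma legal_mkConf_zero (ht : 0 < t) :
    legal t (mkConf t inp f out) 0 =
      match f 0 with
      | x :: _ => x == out.length + 1
      | [] => false := by
  simp only [legal, if_pos, mkConf, getD_map_range ht]

lemma legal_mkConf_of_lt {m : ℕ} (hm : 0 < m) (hmt : m < t) :
    legal t (mkConf t inp f out) m =
      match f m with
      | x :: _ => canPush x (f (m - 1))
      | [] => false := by
  simp only [legal, hm.ne', hmt, if_false, if_true, mkConf, getD_map_range hmt,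
    getD_map_range (show m - 1 < t by omega)]

lemma legal_mkConf_self (ht : 0 < t) :
    legal t (mkConf t inp f out) t =
      match inp with
      | x :: _ => canPush x (f (t - 1))
      | [] => false := by
  simp only [legal, ht.ne', lt_irrefl, if_false, if_true, mkConf,
    getD_map_range (show t - 1 < t by omega)]

lemma legal_eq_false_of_nil {m : ℕ} (hmt : m < t) (hm : f m = []) :
    legal t (mkConf t inp f out) m = false := by
  rcases Nat.eq_zero_or_pos m with rfl | hm0
  · simp [legal_mkConf_zero hmt, hm]
  · simp [legal_mkConf_of_lt hm0 hmt, hm]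

lemma legal_congr {m : ℕ} (inp' : List ℕ) (hmt : m < t) (h : ∀ l ≤ m, f l = g l) :
    legal t (mkConf t inp f out) m = legal t (mkConf t inp' g out) m := by
  rcases Nat.eq_zero_or_pos m with rfl | hm0
  · simp [legal_mkConf_zero hmt, h 0 le_rfl]
  · simp [legal_mkConf_of_lt hm0 hmt, h m le_rfl, h (m - 1) (by omega)]

lemma legal_pop (ht : 0 < t) (x : ℕ) :
    legal t (mkConf t inp (place f 0 x) out) 0 = (x == out.length + 1) := by
  simp [legal_mkConf_zero ht, place]

lemma legal_shift {i : ℕ} (hi : 0 < i) (hit : i < t) (x : ℕ) :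
    legal t (mkConf t inp (place f i x) out) i = canPush x (f (i - 1)) := by
  simp [legal_mkConf_of_lt hi hit, place, show i - 1 ≠ i by omega]

lemma legal_push (ht : 0 < t) (x : ℕ) :
    legal t (mkConf t (x :: inp) f out) t = canPush x (f (t - 1)) := by
  simp [legal_mkConf_self ht]

lemma applyMove_pop (ht : 0 < t) (x : ℕ) :
    applyMove t (mkConf t inp (place f 0 x) out) 0 = mkConf t inp f (out ++ [x]) := by
  simp only [applyMove, if_true, mkConf, getD_map_range ht, place, update_self, set_map_range,
    update_idem, update_eq_self]

lemma applyMove_shift {i : ℕ} (hi : 0 < i) (hit : i < t) (x : ℕ) :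
    applyMove t (mkConf t inp (place f i x) out) i = mkConf t inp (place f (i - 1) x) out := by
  simp only [applyMove, hi.ne', hit, if_false, if_true, mkConf, getD_map_range hit,
    getD_map_range (show i - 1 < t by omega), set_map_range]
  rw [place_apply_of_ne x (show i - 1 ≠ i by omega)]
  simp [place]

lemma applyMove_push (ht : 0 < t) (x : ℕ) :
    applyMove t (mkConf t (x :: inp) f out) t = mkConf t inp (place f (t - 1) x) out := by
  simp only [applyMove, ht.ne', lt_irrefl, if_false, mkConf,
    getD_map_range (show t - 1 < t by omega), set_map_range, place]

def Step (t : ℕ) (c c' : Conf) : Prop := ∃ m, legal t c m = true ∧ applyMove t c m = c'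

lemma exists_runLegal_of_reflTransGen {c c' : Conf} (h : ReflTransGen (Step t) c c') :
    ∃ ms, runLegal t c ms = some c' := by
  induction h using ReflTransGen.head_induction_on with
  | refl => exact ⟨[], rfl⟩
  | head hstep _ ih =>
    obtain ⟨m, hlegal, rfl⟩ := hstep
    obtain ⟨ms, hms⟩ := ih
    exact ⟨m :: ms, by simp [runLegal, hlegal, hms]⟩

lemma step_pop (ht : 0 < t) {x : ℕ} (hx : x = out.length + 1) :
    Step t (mkConf t inp (place f 0 x) out) (mkConf t inp f (out ++ [x])) :=
  ⟨0, by simp [legal_pop ht, hx], applyMove_pop ht x⟩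

lemma step_shift {i x : ℕ} (hi : 0 < i) (hit : i < t) (hx : canPush x (f (i - 1)) = true) :
    Step t (mkConf t inp (place f i x) out) (mkConf t inp (place f (i - 1) x) out) :=
  ⟨i, by rwa [legal_shift hi hit], applyMove_shift hi hit x⟩

lemma step_push (ht : 0 < t) {x : ℕ} (hx : canPush x (f (t - 1)) = true) :
    Step t (mkConf t (x :: inp) f out) (mkConf t inp (place f (t - 1) x) out) :=
  ⟨t, by rwa [legal_push ht], applyMove_push ht x⟩

lemma reflTransGen_step_slide {i j x : ℕ} (hji : j ≤ i) (hit : i < t)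
    (hx : ∀ l, j ≤ l → l < i → canPush x (f l) = true) :
    ReflTransGen (Step t) (mkConf t inp (place f i x) out) (mkConf t inp (place f j x) out) := by
  induction i, hji using Nat.le_induction with
  | base => rfl
  | succ i hji ih =>
    exact .head (step_shift (by omega) hit (hx i hji (by omega)))
      (ih (by omega) fun l h1 h2 => hx l h1 (by omega))

lemma reflTransGen_step_enter {j x : ℕ} (hjt : j < t)
    (hx : ∀ l, j ≤ l → l < t → canPush x (f l) = true) :
    ReflTransGen (Step t) (mkConf t (x :: inp) f out) (mkConf t inp (place f j x) out) :=
  .head (step_push (by omega) (hx _ (by omega) (by omega)))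
    (reflTransGen_step_slide (by omega) (by omega) fun l h1 _ => hx l h1 (by omega))

lemma reflTransGen_step_start (ht : 2 < t) :
    ReflTransGen (Step t) (mkConf t (leftGreedyCounterexample t) (fun _ => []) [])
      (mkConf t (List.range' 6 (t - 1) ++ [3]) (place (place (ladder 5 1 1) 0 5) 0 4) [1, 2]) := by
  simp only [leftGreedyCounterexample, List.cons_append, List.nil_append]
  refine .trans (reflTransGen_step_enter (j := 0) (by omega) fun _ _ _ => rfl) ?_
  refine .trans (reflTransGen_step_enter (j := 1) (by omega) fun l _ _ => ?_) ?_
  · simp only [place, update_apply]; split_ifs <;> simp_all [canPush]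
  refine .trans (reflTransGen_step_enter (j := 2) (by omega) fun l _ _ => ?_) ?_
  · simp only [place, update_apply]; split_ifs <;> simp_all [canPush]
  refine .trans (reflTransGen_step_enter (j := 0) (by omega) fun l _ _ => ?_) ?_
  · simp only [place, update_apply]; split_ifs <;> simp_all [canPush]
  refine .head (step_pop (by omega) rfl) ?_
  rw [place_comm (i := 0) (j := 1) (by omega), place_comm (i := 0) (j := 2) (by omega)]
  refine .head (step_pop (by omega) rfl) ?_
  rw [place_comm (i := 1) (j := 2) (by omega)]
  refine .trans (reflTransGen_step_slide (j := 0) (by omega) (by omega) fun l _ _ => ?_) ?_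
  · simp only [place, update_apply]; split_ifs <;> simp_all [canPush]
  rw [place_comm (i := 2) (j := 0) (by omega)]
  refine .trans (reflTransGen_step_slide (j := 0) (by omega) (by omega) fun l _ _ => ?_) ?_
  · simp only [place, update_apply]; split_ifs <;> simp_all [canPush]
  rw [show ladder 5 1 1 = fun _ => [] by funext l; simp [ladder]; omega]
  exact .refl

lemma reflTransGen_step_load {m : ℕ} (hm : m ≤ t - 1) :
    ReflTransGen (Step t)
      (mkConf t (List.range' 6 (t - 1) ++ [3]) (place (place (ladder 5 1 1) 0 5) 0 4) [1, 2])
      (mkConf t (List.range' (6 + m) (t - 1 - m) ++ [3])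
        (place (place (ladder 5 1 (m + 1)) 0 5) 0 4) [1, 2]) := by
  induction m with
  | zero => exact .refl
  | succ m ih =>
    refine (ih (by omega)).trans ?_
    have hladder : place (place (ladder 5 1 (m + 2)) 0 5) 0 4 =
        place (place (place (ladder 5 1 (m + 1)) 0 5) 0 4) (m + 1) (6 + m) := by
      funext l
      simp only [place, ladder, update_apply]
      split_ifs <;> simp_all <;> omega
    obtain ⟨k, hk⟩ : ∃ k, t - 1 - m = k + 1 := ⟨t - 2 - m, by omega⟩
    rw [hk, List.range'_succ, show t - 1 - (m + 1) = k by omega, List.cons_append, hladder,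
      show 6 + (m + 1) = 6 + m + 1 by omega]
    refine reflTransGen_step_enter (by omega) fun l h1 _ => ?_
    simp only [place, ladder, update_apply]
    split_ifs <;> simp_all [canPush]
    omega

lemma reflTransGen_step_three (ht : 0 < t) :
    ReflTransGen (Step t) (mkConf t [3] (place (place (ladder 5 1 t) 0 5) 0 4) [1, 2])
      (mkConf t [] (ladder 5 1 t) (List.range' 1 5)) := by
  refine .trans (reflTransGen_step_enter (j := 0) ht fun l _ _ => ?_) ?_
  · simp only [place, ladder, update_apply]
    split_ifs <;> simp_all [canPush]
    omega
  exact .head (step_pop ht rfl) (.head (step_pop ht rfl) (.single (step_pop ht rfl)))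

lemma reflTransGen_step_unload {v : ℕ} (h1v : 1 ≤ v) (hvt : v ≤ t) :
    ReflTransGen (Step t) (mkConf t [] (ladder 5 1 t) (List.range' 1 5))
      (mkConf t [] (ladder 5 v t) (List.range' 1 (4 + v))) := by
  induction v, h1v using Nat.le_induction with
  | base => exact .refl
  | succ v h1v ih =>
    refine (ih (by omega)).trans ?_
    have hladder : ladder 5 v t = place (ladder 5 (v + 1) t) v (5 + v) := by
      funext l
      simp only [place, ladder, update_apply]
      split_ifs <;> simp_all <;> omega
    rw [hladder, show 4 + (v + 1) = 4 + v + 1 by omega, List.range'_concat,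
      show 1 + 1 * (4 + v) = 5 + v by omega]
    refine (reflTransGen_step_slide (Nat.zero_le v) (by omega) fun l _ hl => ?_).tail
      (step_pop (by omega) (by simp; omega))
    simp [ladder, show ¬ v + 1 ≤ l by omega, canPush]

theorem sortable_leftGreedyCounterexample (ht : 2 < t) :
    Sortable t (leftGreedyCounterexample t) := by
  refine exists_runLegal_of_reflTransGen ?_
  have hload := reflTransGen_step_load (t := t) le_rfl
  rw [Nat.sub_self, List.range'_zero, List.nil_append, Nat.sub_add_cancel (by omega)] at hload
  have hunload := reflTransGen_step_unload (t := t) (by omega) le_rfl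
  rw [show ladder 5 t t = fun _ => [] by funext l; simp [ladder]] at hunload
  rw [initConf_eq, finalConf_eq, length_leftGreedyCounterexample (by omega), Nat.add_comm t]
  exact (reflTransGen_step_start ht).trans
    (hload.trans ((reflTransGen_step_three (by omega)).trans hunload))

lemma leftMove_eq_some_iff {c : Conf} {m : ℕ} :
    leftMove t c = some m ↔ legal t c m = true ∧ m ≤ t ∧ ∀ k < m, legal t c k = false := by
  simp [leftMove, List.head?_filter, List.find?_range_eq_some]

lemma leftMove_eq_none_iff {c : Conf} : leftMove t c = none ↔ ∀ m ≤ t, legal t c m = false := by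
  simp [leftMove, List.head?_filter, List.find?_eq_none]

lemma greedyStep_eq_applyMove {c : Conf} {m : ℕ} (hleft : legal t c m = true) (hmt : m ≤ t)
    (hlow : ∀ k < m, legal t c k = false) : greedyStep leftMove t c = applyMove t c m := by
  simp [greedyStep, leftMove_eq_some_iff.mpr ⟨hleft, hmt, hlow⟩]

lemma isFixedPt_greedyStep {c : Conf} (h : leftMove t c = none) :
    IsFixedPt (greedyStep leftMove t) c := by
  simp [IsFixedPt, greedyStep, h]

lemma leftMove_finalConf (ht : 0 < t) (n : ℕ) : leftMove t (finalConf t n) = none := by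
  refine leftMove_eq_none_iff.mpr fun m hm => ?_
  rw [finalConf_eq]
  rcases hm.lt_or_eq with hm | rfl
  · exact legal_eq_false_of_nil hm rfl
  · simp [legal_mkConf_self ht]

lemma greedyStep_pop (ht : 0 < t) {x : ℕ} (hx : x = out.length + 1) :
    greedyStep leftMove t (mkConf t inp (place f 0 x) out) = mkConf t inp f (out ++ [x]) := by
  rw [greedyStep_eq_applyMove (by simp [legal_pop ht, hx]) (Nat.zero_le t) (by simp),
    applyMove_pop ht]

-- Only move `t` reads the input, so the empty input stands for any.
def Blocked (t j : ℕ) (f : ℕ → List ℕ) (out : List ℕ) : Prop :=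
  ∀ m < j, legal t (mkConf t [] f out) m = false

lemma blocked_zero : Blocked t 0 f out := fun _ h => absurd h (Nat.not_lt_zero _)

lemma Blocked.succ {j : ℕ} (hb : Blocked t j f out) (hjt : j < t) (hf : f j = []) :
    Blocked t (j + 1) f out := by
  intro m hm
  rcases Nat.lt_succ_iff_lt_or_eq.mp hm with hm | rfl
  · exact hb m hm
  · exact legal_eq_false_of_nil hjt hf

lemma Blocked.legal_eq_false {j m : ℕ} (hb : Blocked t j g out) (hjt : j ≤ t) (hm : m < j)
    (hfg : ∀ l < j, f l = g l) : legal t (mkConf t inp f out) m = false := by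
  rw [legal_congr [] (by omega) fun l hl => hfg l (by omega)]
  exact hb m hm

lemma reflTransGen_greedyStep_slide {i j x : ℕ} (hb : Blocked t (j + 1) f out) (hji : j ≤ i)
    (hit : i < t) (hempty : ∀ l, j < l → l < i → f l = []) (hx : canPush x (f j) = true) :
    ReflTransGen (fun a b => greedyStep leftMove t a = b)
      (mkConf t inp (place f i x) out) (mkConf t inp (place f j x) out) := by
  induction i, hji using Nat.le_induction with
  | base => rfl
  | succ i hji ih =>
    have hlegal : legal t (mkConf t inp (place f (i + 1) x) out) (i + 1) = true := by
      rw [legal_shift (by omega) hit, Nat.add_sub_cancel]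
      rcases hji.eq_or_lt with rfl | hji
      · exact hx
      · rw [hempty i hji (by omega)]; rfl
    have hlow : ∀ k < i + 1, legal t (mkConf t inp (place f (i + 1) x) out) k = false := by
      intro k hk
      rcases Nat.lt_or_ge j k with hjk | hkj
      · exact legal_eq_false_of_nil (by omega)
          (by rw [place_apply_of_ne x (by omega)]; exact hempty k hjk (by omega))
      · exact hb.legal_eq_false (by omega) (by omega) fun l hl => place_apply_of_ne x (by omega)
    refine .head ?_ (ih (by omega) fun l h1 h2 => hempty l h1 (by omega))
    rw [greedyStep_eq_applyMove hlegal hit.le hlow, applyMove_shift (by omega) hit,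
      Nat.add_sub_cancel]

lemma reflTransGen_greedyStep_enter {j x : ℕ} (hb : Blocked t (j + 1) f out) (hjt : j < t)
    (hempty : ∀ l, j < l → l < t → f l = []) (hx : canPush x (f j) = true) :
    ReflTransGen (fun a b => greedyStep leftMove t a = b)
      (mkConf t (x :: inp) f out) (mkConf t inp (place f j x) out) := by
  have hlegal : legal t (mkConf t (x :: inp) f out) t = true := by
    rw [legal_push (by omega)]
    rcases (Nat.le_sub_one_of_lt hjt).eq_or_lt with h | h
    · rwa [← h]
    · rw [hempty (t - 1) h (by omega)]; rfl
  have hlow : ∀ k < t, legal t (mkConf t (x :: inp) f out) k = false := by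
    intro k hk
    rcases Nat.lt_or_ge j k with hjk | hkj
    · exact legal_eq_false_of_nil hk (hempty k hjk hk)
    · exact hb.legal_eq_false (by omega) (by omega) fun l hl => rfl
  refine .head ?_ (reflTransGen_greedyStep_slide hb (Nat.le_sub_one_of_lt hjt) (by omega)
    (fun l h1 h2 => hempty l h1 (by omega)) hx)
  rw [greedyStep_eq_applyMove hlegal le_rfl hlow, applyMove_push (by omega)]

lemma blocked_ladder {c j : ℕ} (hjt : j ≤ t) (hc : c ≠ out.length + 1) :
    Blocked t j (ladder c 0 j) out := by
  intro m hm
  rcases Nat.eq_zero_or_pos m with rfl | hm0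
  · simp [legal_mkConf_zero (by omega : 0 < t), ladder, hm, hc]
  · simp [legal_mkConf_of_lt hm0 (by omega : m < t), ladder, hm, show m - 1 < j by omega, canPush]

lemma reflTransGen_greedyStep_start (ht : 1 < t) :
    ReflTransGen (fun a b => greedyStep leftMove t a = b)
      (mkConf t (leftGreedyCounterexample t) (fun _ => []) [])
      (mkConf t (List.range' 6 (t - 1) ++ [3]) (ladder 4 0 2) [1, 2]) := by
  simp only [leftGreedyCounterexample, List.cons_append, List.nil_append]
  have h0 : 0 < t := by omega
  refine .trans (reflTransGen_greedyStep_enter (j := 0) (blocked_zero.succ h0 rfl) h0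
    (fun _ _ _ => rfl) rfl) ?_
  refine .trans
    (reflTransGen_greedyStep_enter (j := 1) (fun m hm => ?_) ht (fun l hl _ => ?_) rfl) ?_
  · interval_cases m <;> simp [legal_mkConf_zero h0, legal_mkConf_of_lt one_pos ht, place]
  · simp [place, show l ≠ 0 by omega]
  refine .trans
    (reflTransGen_greedyStep_enter (j := 1) (fun m hm => ?_) ht (fun l hl _ => ?_) rfl) ?_
  · interval_cases m <;> simp [legal_mkConf_zero h0, legal_mkConf_of_lt one_pos ht, place, canPush]
  · simp [place, show l ≠ 0 by omega, show l ≠ 1 by omega]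
  refine .trans
    (reflTransGen_greedyStep_enter (j := 1) (fun m hm => ?_) ht (fun l hl _ => ?_) rfl) ?_
  · interval_cases m <;> simp [legal_mkConf_zero h0, legal_mkConf_of_lt one_pos ht, place, canPush]
  · simp [place, show l ≠ 0 by omega, show l ≠ 1 by omega]
  refine .trans (reflTransGen_greedyStep_slide (j := 0) (fun m hm => ?_) (Nat.zero_le 1) ht
    (fun l _ _ => by omega) rfl) ?_
  · interval_cases m; simp [legal_mkConf_zero h0, place]
  refine .head (greedyStep_pop h0 rfl) ?_
  rw [place_comm (i := 0) (j := 1) (by omega), place_comm (i := 0) (j := 1) (by omega)]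
  refine .head (greedyStep_pop h0 rfl) ?_
  refine .trans (reflTransGen_greedyStep_slide (j := 0) (blocked_zero.succ h0 rfl) (Nat.zero_le 1)
    ht (fun l _ _ => by omega) rfl) ?_
  rw [show ladder 4 0 2 = place (place (fun _ => []) 1 5) 0 4 by
    funext l
    simp only [place, ladder, update_apply]
    split_ifs <;> simp_all
    omega]
  exact .refl

lemma reflTransGen_greedyStep_ladder {j : ℕ} (h2j : 2 ≤ j) (hjt : j ≤ t) :
    ReflTransGen (fun a b => greedyStep leftMove t a = b)
      (mkConf t (List.range' 6 (t - 1) ++ [3]) (ladder 4 0 2) [1, 2])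
      (mkConf t (List.range' (4 + j) (t + 1 - j) ++ [3]) (ladder 4 0 j) [1, 2]) := by
  induction j, h2j using Nat.le_induction with
  | base => exact .refl
  | succ j h2j ih =>
    refine (ih (by omega)).trans ?_
    have hladder : ladder 4 0 (j + 1) = place (ladder 4 0 j) j (4 + j) := by
      funext l
      simp only [place, ladder, update_apply]
      split_ifs <;> simp_all <;> omega
    rw [show t + 1 - j = t + 1 - (j + 1) + 1 by omega, List.range'_succ, List.cons_append, hladder,
      show 4 + j + 1 = 4 + (j + 1) by omega]
    refine reflTransGen_greedyStep_enter ((blocked_ladder (by omega) (by simp)).succ (by omega) ?_)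
      (by omega) (fun l hl _ => ?_) ?_ <;> simp [ladder, canPush]
    omega

lemma leftMove_ladder_eq_none (ht : 0 < t) :
    leftMove t (mkConf t [t + 4, 3] (ladder 4 0 t) [1, 2]) = none := by
  refine leftMove_eq_none_iff.mpr fun m hm => ?_
  rcases hm.lt_or_eq with hm | rfl
  · exact (blocked_ladder le_rfl (by simp)).legal_eq_false le_rfl hm fun _ _ => rfl
  · simp [legal_mkConf_self ht, ladder, canPush, ht]
    omega

lemma reflTransGen_greedyStep_stuck (ht : 1 < t) :
    ReflTransGen (fun a b => greedyStep leftMove t a = b)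
      (initConf t (leftGreedyCounterexample t)) (mkConf t [t + 4, 3] (ladder 4 0 t) [1, 2]) := by
  rw [initConf_eq]
  convert (reflTransGen_greedyStep_start ht).trans
    (reflTransGen_greedyStep_ladder (by omega) le_rfl) using 3
  rw [Nat.add_sub_cancel_left, List.range'_one, Nat.add_comm]
  rfl

end SeriesStacks

/-- For `t > 2`, the permutation `2 5 4 1 6 7 ... (t+4) 3` is sortable by `t` stacks in
series, but the left-greedy algorithm on `t` stacks fails on it, at the moment `t+4`
would need to enter the stacks. -/
theorem stmt15 (t : ℕ) (ht : 2 < t) :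
    Sortable t ([2, 5, 4, 1] ++ List.range' 6 (t - 1) ++ [3]) ∧
    ¬ LeftGreedySorts t ([2, 5, 4, 1] ++ List.range' 6 (t - 1) ++ [3]) ∧
    ∃ k : ℕ,
      leftMove t ((greedyStep leftMove t)^[k]
        (initConf t ([2, 5, 4, 1] ++ List.range' 6 (t - 1) ++ [3]))) = none ∧
      ((greedyStep leftMove t)^[k]
        (initConf t ([2, 5, 4, 1] ++ List.range' 6 (t - 1) ++ [3]))).input = [t + 4, 3] := by
  open SeriesStacks in
  rw [show [2, 5, 4, 1] ++ List.range' 6 (t - 1) ++ [3] = leftGreedyCounterexample t from rfl]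
  obtain ⟨k, hk⟩ :=
    exists_iterate_of_reflTransGen (reflTransGen_greedyStep_stuck (by omega : 1 < t))
  have hstuck := leftMove_ladder_eq_none (t := t) (by omega)
  refine ⟨sortable_leftGreedyCounterexample ht, fun ⟨n, hn⟩ => ?_, k, by rw [hk]; exact hstuck,
    by rw [hk]; rfl⟩
  refine iterate_ne_of_isFixedPt hk (isFixedPt_greedyStep hstuck)
    (isFixedPt_greedyStep (leftMove_finalConf (by omega) _)) (fun h => ?_) n hn
  simpa [mkConf, finalConf] using congrArg Conf.input h
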